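/- Let λ be a partition of n and T ∈ SYT(λ) with T ≠ U_λ. Then the composition Schur functions satisfy s_{β(slink(T))} = − s_{β(T)}. -/

import Mathlib

open scoped Classical

noncomputable section

/-- `T` is a standard Young tableau of shape `μ` with entries `1, …, n`.
Here `μ` is a Young diagram (Mathlib convention: row `0` is the longest row,
so the reading word below reads rows from the largest row index down to row `0`,
which corresponds to French notation read from the top row down), and `T` assigns
`0` to cells outside `μ`. -/
def IsSYT (n : ℕ) (μ : YoungDiagram) (T : ℕ × ℕ → ℕ) : Prop :=
  (∀ c, c ∉ μ → T c = 0) ∧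
  Set.BijOn T (↑μ.cells) (Set.Icc 1 n) ∧
  (∀ i j : ℕ, (i, j + 1) ∈ μ → T (i, j) < T (i, j + 1)) ∧
  (∀ i j : ℕ, (i + 1, j) ∈ μ → T (i, j) < T (i + 1, j))

/-- The value `u` occurs before the value `v` in the row reading word of `T`
(rows read from the top row down, each row left to right). -/
def Precedes (μ : YoungDiagram) (T : ℕ × ℕ → ℕ) (u v : ℕ) : Prop :=
  ∃ cu ∈ μ.cells, ∃ cv ∈ μ.cells,
    T cu = u ∧ T cv = v ∧ (cv.1 < cu.1 ∨ (cu.1 = cv.1 ∧ cu.2 < cv.2))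

/-- Interchange the values `a` and `b` in the filling `T`. -/
def swapVals (a b : ℕ) (T : ℕ × ℕ → ℕ) : ℕ × ℕ → ℕ :=
  fun c => if T c = a then b else if T c = b then a else T c

/-- The elementary dual equivalence `d_i` acting on fillings via the row reading
word: identity if `i` occurs between `i-1` and `i+1`; if `i-1` is in the middle it
swaps the values `i` and `i+1`; if `i+1` is in the middle it swaps `i-1` and `i`. -/
def dT (μ : YoungDiagram) (i : ℕ) (T : ℕ × ℕ → ℕ) : ℕ × ℕ → ℕ :=
  if (Precedes μ T i (i-1) ∧ Precedes μ T (i-1) (i+1)) ∨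
     (Precedes μ T (i+1) (i-1) ∧ Precedes μ T (i-1) i) then swapVals i (i+1) T
  else if (Precedes μ T i (i+1) ∧ Precedes μ T (i+1) (i-1)) ∨
     (Precedes μ T (i-1) (i+1) ∧ Precedes μ T (i+1) i) then swapVals (i-1) i T
  else T

/-- The index (1-based) of the run of `T` containing the value `v`: one plus the
number of inverse descents of the reading word of `T` that are smaller than `v`. -/
def runIdx (μ : YoungDiagram) (T : ℕ × ℕ → ℕ) (v : ℕ) : ℕ :=
  1 + ((Finset.Ico 1 v).filter (fun m => Precedes μ T (m+1) m)).card

/-- `b_j`, the largest value in the `j`-th run of `T`: the number of values in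
`{1, …, n}` lying in the first `j` runs. -/
def bsum (n : ℕ) (μ : YoungDiagram) (T : ℕ × ℕ → ℕ) (j : ℕ) : ℕ :=
  ((Finset.Icc 1 n).filter (fun v => runIdx μ T v ≤ j)).card

/-- `β_j(T)`, the size of the `j`-th run of `T`. -/
def betaRun (n : ℕ) (μ : YoungDiagram) (T : ℕ × ℕ → ℕ) (j : ℕ) : ℕ :=
  bsum n μ T j - bsum n μ T (j - 1)

/-- The first `j` runs of `T` form a superstandard tableau: every value `v` of the
first `j` runs lies in row `runIdx(v) - 1` (0-based; i.e. the `m`-th run fills the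
`m`-th row from the bottom, in order). -/
def FirstRunsSS (n : ℕ) (μ : YoungDiagram) (T : ℕ × ℕ → ℕ) (j : ℕ) : Prop :=
  ∀ v, 1 ≤ v → v ≤ n → runIdx μ T v ≤ j →
    ∀ c ∈ μ.cells, T c = v → c.1 = runIdx μ T v - 1

/-- `T` is the superstandard tableau `U_λ` of its shape: each run fills its row. -/
def IsSuperstandard (μ : YoungDiagram) (T : ℕ × ℕ → ℕ) : Prop :=
  ∀ c ∈ μ.cells, c.1 = runIdx μ T (T c) - 1

/-- `μ_r`, the number of cells in the `r`-th row (1-based) of the shape of the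
first `j` runs of `T`. -/
def shapeRow (μ : YoungDiagram) (T : ℕ × ℕ → ℕ) (j r : ℕ) : ℕ :=
  (μ.cells.filter (fun c => runIdx μ T (T c) ≤ j ∧ c.1 = r - 1)).card

/-- The cells of the `a`-th and `j`-th runs of `T` lying strictly below the `j`-th
row (1-based rows; row `j` has 0-based index `j - 1`). -/
def belowCells (μ : YoungDiagram) (T : ℕ × ℕ → ℕ) (a j : ℕ) : Finset (ℕ × ℕ) :=
  μ.cells.filter (fun c => (runIdx μ T (T c) = a ∨ runIdx μ T (T c) = j) ∧ c.1 + 1 < j)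

/-- `T'` is obtained from `T` by permuting the cells of the `a`-th and `j`-th runs
lying strictly below the `j`-th row, giving the first `k` of these cells (in row
reading order) to the `a`-th run and the rest to the `j`-th run; all other runs,
and the part of the `j`-th run weakly above the `j`-th row, keep their cells. -/
def Redistrib (μ : YoungDiagram) (T T' : ℕ × ℕ → ℕ) (a j k : ℕ) : Prop :=
  (∀ c ∈ μ.cells, runIdx μ T (T c) ≠ a → runIdx μ T (T c) ≠ j →
      runIdx μ T' (T' c) = runIdx μ T (T c)) ∧
  (∀ c ∈ μ.cells, runIdx μ T (T c) = j → j ≤ c.1 + 1 → runIdx μ T' (T' c) = j) ∧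
  (∀ c ∈ belowCells μ T a j,
      runIdx μ T' (T' c) =
        if ((belowCells μ T a j).filter
              (fun c' => c.1 < c'.1 ∨ (c'.1 = c.1 ∧ c'.2 < c.2))).card < k
        then a else j)

/-- The indices `i` and `j` from the definition of `slink` and `slink_*`:
`j` is minimal such that the first `j` runs of `T` do not form a superstandard
tableau, and `i` is minimal with `μ_{i+1} ≤ β_j(T) + i - j` (written additively to
avoid natural subtraction). -/
def SlinkData (n : ℕ) (μ : YoungDiagram) (T : ℕ × ℕ → ℕ) (i j : ℕ) : Prop :=
  1 ≤ j ∧ ¬ FirstRunsSS n μ T j ∧ (∀ j', j' < j → FirstRunsSS n μ T j') ∧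
  1 ≤ i ∧ shapeRow μ T j (i + 1) + j ≤ betaRun n μ T j + i ∧
  (∀ i', 1 ≤ i' → i' < i → betaRun n μ T j + i' < shapeRow μ T j (i' + 1) + j)

/-- `T' = slink_*(T)`: both are standard Young tableaux of a common shape; if `T`
is superstandard then `T' = T`, and otherwise `T'` is obtained by permuting the
cells of the `i`-th and `j`-th runs below the `j`-th row, giving the first
`β_j(T) + i - j` of them to the `i`-th run. -/
def SlinkStarRel (n : ℕ) (T T' : ℕ × ℕ → ℕ) : Prop :=
  ∃ μ : YoungDiagram, IsSYT n μ T ∧ IsSYT n μ T' ∧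
    ((IsSuperstandard μ T ∧ T' = T) ∨
     (¬ IsSuperstandard μ T ∧ ∃ i j, SlinkData n μ T i j ∧
        Redistrib μ T T' i j (betaRun n μ T j + i - j)))

/-- `T' = slink(T)`: both are standard Young tableaux of a common shape; if `T` is
superstandard then `T' = T`, and otherwise `T'` is obtained by permuting the cells
of the `(j-1)`-st and `j`-th runs below the `j`-th row, giving the first
`β_j(T) - 1` of them to the `(j-1)`-st run. -/
def SlinkRel (n : ℕ) (T T' : ℕ × ℕ → ℕ) : Prop :=
  ∃ μ : YoungDiagram, IsSYT n μ T ∧ IsSYT n μ T' ∧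
    ((IsSuperstandard μ T ∧ T' = T) ∨
     (¬ IsSuperstandard μ T ∧ ∃ i j, SlinkData n μ T i j ∧
        Redistrib μ T T' (j - 1) j (betaRun n μ T j - 1)))

/-- `β(T)`, the composition of `n` recording the run sizes of `T`. -/
def betaList (n : ℕ) (μ : YoungDiagram) (T : ℕ × ℕ → ℕ) : List ℕ :=
  (List.range (runIdx μ T n)).map (fun m => betaRun n μ T (m + 1))

/-- The vector `v_i = α_i - i` (1-based) attached to a composition `α`; the slinky
move on compositions swaps adjacent entries of `v`, and `s_α = 0` iff `v` has a
repeated entry. -/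
def vvec (l : List ℕ) : List ℤ := l.mapIdx (fun idx a => (a : ℤ) - (idx + 1))

/-- The number of non-inversions of a list (pairs out of decreasing order);
its parity is the sign relating `s_α` to `s_λ` under the slinky correspondence. -/
def invCount (l : List ℤ) : ℕ :=
  (((Finset.range l.length) ×ˢ (Finset.range l.length)).filter
    (fun p => p.1 < p.2 ∧ l.getD p.1 0 < l.getD p.2 0)).card

/-- The composition Schur function `s_α`, encoded faithfully in the free
`ℤ`-module on the multisets `{α_i - i}`: `s_α = 0` if `v(α)` has a repeated entry,
and otherwise `s_α = (-1)^{inv} s_λ` where `λ` is the unique partition with the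
same `v`-multiset (so `s_λ` is encoded as the basis element of that multiset). -/
def compSchur (l : List ℕ) : Multiset ℤ →₀ ℤ :=
  if (vvec l).Nodup then
    Finsupp.single (↑(vvec l) : Multiset ℤ) ((-1) ^ invCount (vvec l))
  else 0

/-!
Let `j` be the first run at which `T` stops being superstandard. Runs `1, …, j - 1` fill rows
`1, …, j - 1`, and a run meets each column at most once: along a run the values increase in the
reading word, which reads columns downwards, while in a column they increase upwards. Hence every
cell of run `j` weakly above row `j` sits directly above a cell of run `j - 1`, so at least
`β_j` cells of runs `j - 1` and `j` lie below row `j`. Slink therefore gives exactly `β_j - 1` of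
them to run `j - 1` and `β_{j-1} + 1` to run `j`, leaving all other runs alone: `β(slink T)` is
the slinky move of `β(T)` at position `j - 1`. On `v_i = α_i - i` this move transposes two adjacent
entries, which keeps the multiset of the `v_i` and changes the number of ascending pairs by one,
so it negates `s_α`.
-/

open Finset

lemma neg_one_pow_card_eq_neg_of_card_erase {α : Type*} [DecidableEq α] {s t : Finset α} {x : α}
    (h : #(s.erase x) = #(t.erase x)) (hx : x ∈ s ↔ x ∉ t) :
    (-1 : ℤ) ^ #s = -(-1) ^ #t := by
  by_cases hs : x ∈ s
  · rw [← card_erase_add_one hs, h, erase_eq_of_notMem (hx.1 hs), pow_succ]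
    ring
  · have ht : x ∈ t := by tauto
    rw [← card_erase_add_one ht, ← h, erase_eq_of_notMem hs, pow_succ]
    ring

lemma card_filter_card_filter_lt_lt {β α : Type*} [LinearOrder α] {B : Finset β} {f : β → α}
    (hf : Set.InjOn f B) {k : ℕ} (hk : k ≤ #B) :
    #{x ∈ B | #{y ∈ B | f y < f x} < k} = k := by
  set rank : β → ℕ := fun x => #{y ∈ B | f y < f x}
  have hmono : ∀ x ∈ B, ∀ y ∈ B, f x < f y → rank x < rank y := fun x hx y _ hxy =>
    card_lt_card ⟨monotone_filter_right _ fun _ _ hz => hz.trans hxy,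
      not_subset.2 ⟨x, mem_filter.2 ⟨hx, hxy⟩, fun h => (mem_filter.1 h).2.false⟩⟩
  have hinj : Set.InjOn rank B := fun x hx y hy h => by
    by_contra hne
    rcases (hf.ne hx hy hne).lt_or_gt with hlt | hlt
    · exact (hmono x hx y hy hlt).ne h
    · exact (hmono y hy x hx hlt).ne h.symm
  have himage : B.image rank = range #B := by
    refine eq_of_subset_of_card_le (fun r hr => ?_) (by rw [card_range, card_image_of_injOn hinj])
    obtain ⟨x, hx, rfl⟩ := mem_image.1 hr
    exact mem_range.2 (card_lt_card (filter_ssubset.2 ⟨x, hx, lt_irrefl _⟩))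
  calc #{x ∈ B | rank x < k} = #((B.image rank).filter (· < k)) := by
        rw [filter_image, card_image_of_injOn (hinj.mono (filter_subset _ _))]
    _ = k := by
        rw [himage, show (range #B).filter (· < k) = range k by ext; simp; omega, card_range]

-- Position of a cell in the row reading word: rows by decreasing index, each left to right.
def readKey (c : ℕ × ℕ) : ℕᵒᵈ ×ₗ ℕ := toLex (OrderDual.toDual c.1, c.2)

lemma readKey_lt_readKey {c c' : ℕ × ℕ} :
    readKey c < readKey c' ↔ c'.1 < c.1 ∨ c.1 = c'.1 ∧ c.2 < c'.2 := by
  rw [readKey, readKey, Prod.Lex.toLex_lt_toLex]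
  simp [OrderDual.toDual_lt_toDual]

lemma readKey_injective : Function.Injective readKey := fun c c' h => by
  simpa [readKey, Prod.ext_iff] using h

section Slinky

variable {R p : ℕ}

def ascentPairs (R : ℕ) (g : ℕ → ℤ) : Finset (ℕ × ℕ) :=
  {q ∈ range R ×ˢ range R | q.1 < q.2 ∧ g q.1 < g q.2}

lemma invCount_map_range (g : ℕ → ℤ) :
    invCount ((List.range R).map g) = #(ascentPairs R g) := by
  unfold invCount ascentPairs
  simp only [List.length_map, List.length_range]
  congr 1
  refine filter_congr fun q hq => ?_
  simp only [mem_product, mem_range] at hq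
  simp [hq.1, hq.2]

lemma vvec_map_range (f : ℕ → ℕ) :
    vvec ((List.range R).map f) = (List.range R).map fun m => (f m : ℤ) - (m + 1) := by
  rw [vvec, show (do let a ← (List.range R).map f; pure (a : ℤ)) = ((List.range R).map f).map (↑)
    from List.flatMap_pure_eq_map _ _]
  apply List.ext_getElem <;> simp

lemma swap_apply_lt_swap_apply {a b : ℕ} (hab : a < b) (hne : (a, b) ≠ (p, p + 1)) :
    Equiv.swap p (p + 1) a < Equiv.swap p (p + 1) b := by
  simp only [ne_eq, Prod.mk.injEq] at hne
  simp only [Equiv.swap_apply_def]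
  split_ifs <;> omega

lemma swap_apply_lt_of_lt {a : ℕ} (hp : p + 1 < R) (ha : a < R) : Equiv.swap p (p + 1) a < R := by
  simp only [Equiv.swap_apply_def]
  split_ifs <;> omega

lemma mapsTo_swap_ascentPairs (hp : p + 1 < R) (g : ℕ → ℤ) :
    Set.MapsTo (Prod.map (Equiv.swap p (p + 1)) (Equiv.swap p (p + 1)))
      ((ascentPairs R (g ∘ Equiv.swap p (p + 1))).erase (p, p + 1))
      ((ascentPairs R g).erase (p, p + 1)) := by
  rintro ⟨a, b⟩ hab
  simp only [coe_erase, Set.mem_sdiff, mem_coe, ascentPairs, mem_filter, mem_product, mem_range,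
    Set.mem_singleton_iff, Function.comp_apply] at hab ⊢
  obtain ⟨⟨⟨ha, hb⟩, hlt, hg⟩, hne⟩ := hab
  refine ⟨⟨⟨swap_apply_lt_of_lt hp ha, swap_apply_lt_of_lt hp hb⟩,
    swap_apply_lt_swap_apply hlt hne, hg⟩, ?_⟩
  simp only [Prod.map, Prod.mk.injEq, Equiv.swap_apply_eq_iff, Equiv.swap_apply_left,
    Equiv.swap_apply_right]
  omega

lemma neg_one_pow_card_ascentPairs_swap (hp : p + 1 < R) {g : ℕ → ℤ} (hg : g p ≠ g (p + 1)) :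
    (-1 : ℤ) ^ #(ascentPairs R (g ∘ Equiv.swap p (p + 1))) = -(-1) ^ #(ascentPairs R g) := by
  set σ := Equiv.swap p (p + 1)
  have hback := mapsTo_swap_ascentPairs hp (g ∘ σ)
  rw [show (g ∘ σ) ∘ σ = g by ext; simp [σ]] at hback
  have hcard :
      #((ascentPairs R (g ∘ σ)).erase (p, p + 1)) = #((ascentPairs R g).erase (p, p + 1)) :=
    card_nbij' _ _ (mapsTo_swap_ascentPairs hp g) hback
      (fun q _ => by simp [Prod.map]) (fun q _ => by simp [Prod.map])
  refine neg_one_pow_card_eq_neg_of_card_erase hcard ?_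
  have hmem : ∀ g : ℕ → ℤ, (p, p + 1) ∈ ascentPairs R g ↔ g p < g (p + 1) := fun g => by
    simp [ascentPairs]; omega
  simp only [hmem, Function.comp_apply, σ, Equiv.swap_apply_left, Equiv.swap_apply_right]
  omega

lemma coe_map_range_comp_swap (hp : p + 1 < R) (g : ℕ → ℤ) :
    (((List.range R).map (g ∘ Equiv.swap p (p + 1)) : List ℤ) : Multiset ℤ) =
      (((List.range R).map g : List ℤ) : Multiset ℤ) := by
  have hsupp : {a | Equiv.swap p (p + 1) a ≠ a} ⊆ (range R : Set ℕ) := fun a ha => by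
    by_contra h
    simp only [coe_range, Set.mem_Iio, not_lt] at h
    exact ha (Equiv.swap_apply_of_ne_of_ne (by omega) (by omega))
  rw [← Multiset.map_coe, ← Multiset.map_coe, ← Multiset.map_map]
  change Multiset.map g ((range R).map (Equiv.swap p (p + 1)).toEmbedding).val = _
  rw [map_perm hsupp]
  rfl

theorem compSchur_slinky (hp : p + 1 < R) {f f' : ℕ → ℕ}
    (hf : ∀ q, q ≠ p → q ≠ p + 1 → f' q = f q) (hleft : f' p + 1 = f (p + 1))
    (hright : f' (p + 1) = f p + 1) :
    compSchur ((List.range R).map f') = -compSchur ((List.range R).map f) := by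
  set g : ℕ → ℤ := fun m => (f m : ℤ) - (m + 1)
  have hv : vvec ((List.range R).map f) = (List.range R).map g := vvec_map_range f
  have hvv : vvec ((List.range R).map f') = (List.range R).map (g ∘ Equiv.swap p (p + 1)) := by
    rw [vvec_map_range]
    refine List.map_congr_left fun q _ => ?_
    simp only [g, Function.comp_apply, Equiv.swap_apply_def]
    split_ifs with h₀ h₁
    · subst h₀; push_cast [← hleft]; ring
    · subst h₁; push_cast [hright]; ring
    · rw [hf q h₀ h₁]
  have hperm := coe_map_range_comp_swap hp g
  have hnodup : ((List.range R).map (g ∘ Equiv.swap p (p + 1))).Nodup ↔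
      ((List.range R).map g).Nodup := by
    rw [← Multiset.coe_nodup, hperm, Multiset.coe_nodup]
  unfold compSchur
  rw [hvv, hv]
  by_cases hnd : ((List.range R).map g).Nodup
  · rw [if_pos (hnodup.2 hnd), if_pos hnd]
    have hg : g p ≠ g (p + 1) := fun h => by
      have := (List.Nodup.getElem_inj_iff hnd (i := p) (j := p + 1)
        (hi := by simp; omega) (hj := by simp; omega)).1 (by simpa using h)
      omega
    rw [invCount_map_range, invCount_map_range, neg_one_pow_card_ascentPairs_swap hp hg, hperm,
      Finsupp.single_neg]
  · rw [if_neg (mt hnodup.1 hnd), if_neg hnd, neg_zero]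

end Slinky

section Runs

variable {μ : YoungDiagram} {T : ℕ × ℕ → ℕ}

lemma one_le_runIdx (v : ℕ) : 1 ≤ runIdx μ T v := Nat.le_add_right 1 _

lemma runIdx_mono : Monotone (runIdx μ T) := fun _ _ h =>
  Nat.add_le_add_left (card_le_card (filter_subset_filter _ (Ico_subset_Ico le_rfl h))) 1

lemma runIdx_of_le_one {v : ℕ} (hv : v ≤ 1) : runIdx μ T v = 1 := by
  interval_cases v <;> simp [runIdx]

lemma runIdx_succ {v : ℕ} (hv : 1 ≤ v) :
    runIdx μ T (v + 1) = runIdx μ T v + if Precedes μ T (v + 1) v then 1 else 0 := by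
  unfold runIdx
  rw [Nat.Ico_succ_right_eq_insert_Ico hv, filter_insert]
  split_ifs with h
  · rw [card_insert_of_notMem (by simp)]; ring
  · rfl

lemma runIdx_succ_le (v : ℕ) : runIdx μ T (v + 1) ≤ runIdx μ T v + 1 := by
  rcases Nat.eq_zero_or_pos v with rfl | hv
  · simp [runIdx_of_le_one]
  · rw [runIdx_succ hv]; split_ifs <;> omega

lemma exists_runIdx_eq {v : ℕ} (hv : 1 ≤ v) {m : ℕ} (hm : 1 ≤ m) (hmv : m ≤ runIdx μ T v) :
    ∃ u, 1 ≤ u ∧ u ≤ v ∧ runIdx μ T u = m := by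
  induction v, hv using Nat.le_induction with
  | base => exact ⟨1, le_rfl, le_rfl, by rw [runIdx_of_le_one le_rfl] at hmv ⊢; omega⟩
  | succ w hw ih =>
    by_cases h : m ≤ runIdx μ T w
    · obtain ⟨u, hu1, huw, hu⟩ := ih h
      exact ⟨u, hu1, by omega, hu⟩
    · exact ⟨w + 1, by omega, le_rfl, by have := runIdx_succ_le (μ := μ) (T := T) w; omega⟩

end Runs

def runSize (μ : YoungDiagram) (T : ℕ × ℕ → ℕ) (m : ℕ) : ℕ :=
  #{c ∈ μ.cells | runIdx μ T (T c) = m}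

lemma FirstRunsSS.exists_runIdx_eq_succ {n : ℕ} {μ : YoungDiagram} {T : ℕ × ℕ → ℕ} {j : ℕ}
    (h : FirstRunsSS n μ T j) (h' : ¬FirstRunsSS n μ T (j + 1)) :
    ∃ v, 1 ≤ v ∧ v ≤ n ∧ runIdx μ T v = j + 1 := by
  by_contra! hne
  exact h' fun v hv1 hvn hvj => h v hv1 hvn (by have := hne v hv1 hvn; omega)

namespace IsSYT

variable {n : ℕ} {μ : YoungDiagram} {T : ℕ × ℕ → ℕ}

lemma mem_cells_iff (hT : IsSYT n μ T) {c : ℕ × ℕ} : c ∈ μ.cells ↔ 1 ≤ T c ∧ T c ≤ n :=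
  ⟨fun hc => Set.mem_Icc.1 (hT.2.1.mapsTo (mem_coe.2 hc)), fun hv => by
    by_contra hc
    have := hT.1 c hc
    omega⟩

lemma exists_mem_cells_eq (hT : IsSYT n μ T) {v : ℕ} (h1 : 1 ≤ v) (h2 : v ≤ n) :
    ∃ c ∈ μ.cells, T c = v := hT.2.1.surjOn (Set.mem_Icc.2 ⟨h1, h2⟩)

lemma eq_of_apply_eq (hT : IsSYT n μ T) {c c' : ℕ × ℕ} (hc : c ∈ μ.cells) (hc' : c' ∈ μ.cells)
    (h : T c = T c') : c = c' := hT.2.1.injOn hc hc' h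

lemma shape_eq {ν : YoungDiagram} (hT : IsSYT n μ T) (hν : IsSYT n ν T) : μ = ν :=
  YoungDiagram.ext (Finset.ext fun _ => by rw [hT.mem_cells_iff, hν.mem_cells_iff])

lemma lt_of_fst_lt (hT : IsSYT n μ T) {r r' j : ℕ} (h : (r, j) ∈ μ) (hr : r' < r) :
    T (r', j) < T (r, j) := by
  induction r, hr using Nat.le_induction with
  | base => exact hT.2.2.2 r' j h
  | succ s hs ih => exact (ih (μ.up_left_mem (Nat.le_succ s) le_rfl h)).trans (hT.2.2.2 s j h)

lemma precedes_iff (hT : IsSYT n μ T) {c c' : ℕ × ℕ} (hc : c ∈ μ.cells) (hc' : c' ∈ μ.cells) :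
    Precedes μ T (T c) (T c') ↔ readKey c < readKey c' := by
  rw [readKey_lt_readKey]
  constructor
  · rintro ⟨d, hd, d', hd', hdc, hdc', h⟩
    rwa [← hT.eq_of_apply_eq hd hc hdc, ← hT.eq_of_apply_eq hd' hc' hdc']
  · exact fun h => ⟨c, hc, c', hc', rfl, rfl, h⟩

lemma readKey_lt_of_runIdx_succ_eq (hT : IsSYT n μ T) {c c' : ℕ × ℕ} (hc : c ∈ μ.cells)
    (hc' : c' ∈ μ.cells) (hcc' : T c' = T c + 1)
    (hrun : runIdx μ T (T c + 1) = runIdx μ T (T c)) : readKey c < readKey c' := by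
  have hnot : ¬Precedes μ T (T c') (T c) := by
    rw [hcc']
    intro h
    rw [runIdx_succ (hT.mem_cells_iff.1 hc).1, if_pos h] at hrun
    omega
  rw [hT.precedes_iff hc' hc, not_lt] at hnot
  exact hnot.lt_of_ne (readKey_injective.ne fun h => by rw [h] at hcc'; omega)

lemma readKey_lt_of_runIdx_eq (hT : IsSYT n μ T) {c c' : ℕ × ℕ} (hc : c ∈ μ.cells)
    (hc' : c' ∈ μ.cells) (hlt : T c < T c') (hrun : runIdx μ T (T c) = runIdx μ T (T c')) :
    readKey c < readKey c' := by
  obtain ⟨v, hv⟩ : ∃ v, T c' = v := ⟨_, rfl⟩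
  rw [hv] at hlt hrun
  induction v, hlt using Nat.le_induction generalizing c' with
  | base => exact hT.readKey_lt_of_runIdx_succ_eq hc hc' hv hrun.symm
  | succ v hv' ih =>
    have := hT.mem_cells_iff.1 hc
    have := hT.mem_cells_iff.1 hc'
    obtain ⟨w, hw, hTw⟩ := hT.exists_mem_cells_eq (v := v) (by omega) (by omega)
    have hrun' : runIdx μ T (T c) = runIdx μ T v := le_antisymm (runIdx_mono (by omega))
      (hrun ▸ runIdx_mono (Nat.le_succ v))
    refine (ih hw hrun' hTw).trans (hT.readKey_lt_of_runIdx_succ_eq hw hc' (by omega) ?_)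
    rw [hTw, ← hrun, ← hrun']

lemma _root_.FirstRunsSS.fst_eq {j : ℕ}
    (h : FirstRunsSS n μ T j) (hT : IsSYT n μ T) {c : ℕ × ℕ} (hc : c ∈ μ.cells)
    (hle : runIdx μ T (T c) ≤ j) : c.1 = runIdx μ T (T c) - 1 :=
  h _ (hT.mem_cells_iff.1 hc).1 (hT.mem_cells_iff.1 hc).2 hle c hc rfl

lemma eq_of_runIdx_eq_of_snd_eq (hT : IsSYT n μ T) {c c' : ℕ × ℕ} (hc : c ∈ μ.cells)
    (hc' : c' ∈ μ.cells) (hrun : runIdx μ T (T c) = runIdx μ T (T c')) (hcol : c.2 = c'.2) :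
    c = c' := by
  wlog hlt : T c < T c' generalizing c c'
  · rcases (not_lt.1 hlt).lt_or_eq with hlt | heq
    · exact (this hc' hc hrun.symm hcol.symm hlt).symm
    · exact hT.eq_of_apply_eq hc hc' heq.symm
  have hkey := readKey_lt_readKey.1 (hT.readKey_lt_of_runIdx_eq hc hc' hlt hrun)
  obtain ⟨r, i⟩ := c
  obtain ⟨r', i'⟩ := c'
  dsimp only at hcol hkey
  subst hcol
  have := hT.lt_of_fst_lt hc (show r' < r by omega)
  omega

lemma firstRunsSS_one (hT : IsSYT n μ T) : FirstRunsSS n μ T 1 := by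
  intro v hv1 hvn hrun c hc hcv
  obtain ⟨c₁, hc₁, hTc₁⟩ := hT.exists_mem_cells_eq le_rfl (hv1.trans hvn)
  have hrow₁ : c₁.1 = 0 := by
    by_contra h0
    have := hT.lt_of_fst_lt hc₁ (Nat.pos_of_ne_zero h0)
    rw [Prod.mk.eta] at this
    have := (hT.mem_cells_iff.1 (μ.up_left_mem (Nat.zero_le c₁.1) le_rfl hc₁)).1
    omega
  have hrunv : runIdx μ T v = 1 := le_antisymm hrun (one_le_runIdx v)
  rw [hrunv]
  rcases hv1.lt_or_eq with hlt | rfl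
  · have := readKey_lt_readKey.1 (hT.readKey_lt_of_runIdx_eq hc₁ hc (by omega)
      (by rw [hTc₁, hcv, hrunv, runIdx_of_le_one le_rfl]))
    omega
  · rw [hT.eq_of_apply_eq hc hc₁ (hcv.trans hTc₁.symm), hrow₁]

lemma card_filter_val_eq (hT : IsSYT n μ T) (P : ℕ → Prop) [DecidablePred P] :
    #{v ∈ Icc 1 n | P v} = #{c ∈ μ.cells | P (T c)} := by
  refine (card_nbij T (fun c hc => ?_) (hT.2.1.injOn.mono (filter_subset _ _)) fun v hv => ?_).symm
  · simp only [coe_filter, Set.mem_ofPred_eq, mem_Icc] at hc ⊢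
    exact ⟨hT.mem_cells_iff.1 hc.1, hc.2⟩
  · simp only [coe_filter, Set.mem_ofPred_eq, mem_Icc] at hv
    obtain ⟨c, hc, rfl⟩ := hT.exists_mem_cells_eq hv.1.1 hv.1.2
    exact ⟨c, by simpa using ⟨hc, hv.2⟩, rfl⟩

lemma betaRun_eq_runSize (hT : IsSYT n μ T) {m : ℕ} (hm : 1 ≤ m) :
    betaRun n μ T m = runSize μ T m := by
  have hsplit : #{c ∈ μ.cells | runIdx μ T (T c) ≤ m} =
      #{c ∈ μ.cells | runIdx μ T (T c) ≤ m - 1} + runSize μ T m := by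
    rw [runSize, ← card_union_of_disjoint (disjoint_filter.2 fun _ _ _ _ => by omega),
      ← filter_or]
    exact congrArg card (filter_congr fun _ _ => by omega)
  rw [betaRun, bsum, bsum, hT.card_filter_val_eq, hT.card_filter_val_eq, hsplit]
  omega

lemma betaList_eq (hT : IsSYT n μ T) :
    betaList n μ T = (List.range (runIdx μ T n)).map fun m => runSize μ T (m + 1) :=
  List.map_congr_left fun _ _ => hT.betaRun_eq_runSize (Nat.le_add_left 1 _)

lemma runSize_pos (hT : IsSYT n μ T) (hn : 1 ≤ n) {m : ℕ} (hm : 1 ≤ m)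
    (hmn : m ≤ runIdx μ T n) : 0 < runSize μ T m := by
  obtain ⟨v, hv1, hvn, hv⟩ := exists_runIdx_eq hn hm hmn
  obtain ⟨c, hc, rfl⟩ := hT.exists_mem_cells_eq hv1 hvn
  exact card_pos.2 ⟨c, mem_filter.2 ⟨hc, hv⟩⟩

lemma runIdx_eq_of_runSize_pos (hT : IsSYT n μ T) {R : ℕ}
    (hle : ∀ c ∈ μ.cells, runIdx μ T (T c) ≤ R) (hpos : 0 < runSize μ T R) :
    runIdx μ T n = R := by
  obtain ⟨c, hc⟩ := card_pos.1 hpos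
  rw [mem_filter] at hc
  have hcn := hT.mem_cells_iff.1 hc.1
  obtain ⟨d, hd, hdn⟩ := hT.exists_mem_cells_eq (hcn.1.trans hcn.2) le_rfl
  exact le_antisymm (hdn ▸ hle d hd) (hc.2 ▸ runIdx_mono hcn.2)

lemma card_filter_runIdx_eq_succ_le (hT : IsSYT n μ T) {p : ℕ} (hss : FirstRunsSS n μ T (p + 1)) :
    #{c ∈ μ.cells | runIdx μ T (T c) = p + 2 ∧ p + 1 ≤ c.1} ≤ runSize μ T (p + 1) := by
  -- a cell of run `p + 2` above row `p` sits over a cell of row `p` of an earlier run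
  refine card_le_card_of_injOn (fun c => (p, c.2)) (fun c hc => ?_) fun c hc c' hc' h => ?_
  · simp only [coe_filter, Set.mem_ofPred_eq] at hc
    obtain ⟨hc, hrun, hrow⟩ := hc
    have hd : (p, c.2) ∈ μ.cells := μ.up_left_mem (by omega) le_rfl hc
    have hlt : T (p, c.2) < T c := hT.lt_of_fst_lt hc (by omega)
    have hne : runIdx μ T (T (p, c.2)) ≠ p + 2 := fun h =>
      absurd (congrArg Prod.fst (hT.eq_of_runIdx_eq_of_snd_eq hd hc (h.trans hrun.symm) rfl))
        (by simp only; omega)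
    have hle : runIdx μ T (T (p, c.2)) ≤ p + 1 := by
      have := hrun ▸ runIdx_mono (μ := μ) (T := T) hlt.le
      omega
    have hrow' : p = runIdx μ T (T (p, c.2)) - 1 := hss.fst_eq hT hd hle
    have := one_le_runIdx (μ := μ) (T := T) (T (p, c.2))
    simp only [coe_filter, Set.mem_ofPred_eq]
    exact ⟨hd, by omega⟩
  · simp only [coe_filter, Set.mem_ofPred_eq] at hc hc'
    exact hT.eq_of_runIdx_eq_of_snd_eq hc.1 hc'.1 (hc.2.1.trans hc'.2.1.symm)
      (Prod.ext_iff.1 h).2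

end IsSYT

def readRank (B : Finset (ℕ × ℕ)) (c : ℕ × ℕ) : ℕ := #{c' ∈ B | readKey c' < readKey c}

lemma card_filter_readRank_lt {B : Finset (ℕ × ℕ)} {k : ℕ} (hk : k ≤ #B) :
    #{c ∈ B | readRank B c < k} = k :=
  card_filter_card_filter_lt_lt readKey_injective.injOn hk

lemma card_belowCells {μ : YoungDiagram} {T : ℕ × ℕ → ℕ} {a j : ℕ}
    (ha : ∀ c ∈ μ.cells, runIdx μ T (T c) = a → c.1 + 1 < j) (haj : a ≠ j) :
    #(belowCells μ T a j) =
      runSize μ T a + #{c ∈ μ.cells | runIdx μ T (T c) = j ∧ c.1 + 1 < j} := by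
  rw [runSize, ← card_union_of_disjoint (disjoint_filter.2 fun _ _ h h' => haj (h.symm.trans h'.1)),
    ← filter_or, belowCells]
  exact congrArg card (filter_congr fun c hc => by have := ha c hc; tauto)

lemma IsSYT.runSize_le_card_belowCells {n : ℕ} {μ : YoungDiagram} {T : ℕ × ℕ → ℕ}
    (hT : IsSYT n μ T) {p : ℕ} (hss : FirstRunsSS n μ T (p + 1)) :
    runSize μ T (p + 2) ≤ #(belowCells μ T (p + 1) (p + 2)) := by
  have hsplit := card_filter_add_card_filter_not
    (s := {c ∈ μ.cells | runIdx μ T (T c) = p + 2}) (fun c => c.1 + 1 < p + 2)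
  rw [filter_filter, filter_filter] at hsplit
  have habove : #{c ∈ μ.cells | runIdx μ T (T c) = p + 2 ∧ ¬c.1 + 1 < p + 2} ≤
      runSize μ T (p + 1) :=
    (card_le_card (monotone_filter_right _ fun _ _ h => ⟨h.1, by omega⟩)).trans
      (hT.card_filter_runIdx_eq_succ_le hss)
  rw [card_belowCells (fun c hc h => by have := hss.fst_eq hT hc h.le; omega) (by omega)]
  unfold runSize at *
  omega

namespace Redistrib

variable {μ : YoungDiagram} {T T' : ℕ × ℕ → ℕ} {a j k : ℕ}

lemma runIdx_eq (hR : Redistrib μ T T' a j k)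
    (ha : ∀ c ∈ μ.cells, runIdx μ T (T c) = a → c.1 + 1 < j) {c : ℕ × ℕ} (hc : c ∈ μ.cells) :
    runIdx μ T' (T' c) = if c ∈ belowCells μ T a j then
      (if readRank (belowCells μ T a j) c < k then a else j) else runIdx μ T (T c) := by
  by_cases hB : c ∈ belowCells μ T a j
  · rw [if_pos hB, hR.2.2 c hB, readRank]
    congr 3
    exact filter_congr fun c' _ => readKey_lt_readKey.symm
  · rw [if_neg hB]
    by_cases hj : runIdx μ T (T c) = j
    · exact (hR.2.1 c hc hj (not_lt.1 fun h => hB (mem_filter.2 ⟨hc, Or.inr hj, h⟩))).trans hj.symm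
    · exact hR.1 c hc (fun h => hB (mem_filter.2 ⟨hc, Or.inl h, ha c hc h⟩)) hj

lemma runSize_of_ne (hR : Redistrib μ T T' a j k)
    (ha : ∀ c ∈ μ.cells, runIdx μ T (T c) = a → c.1 + 1 < j) {m : ℕ} (hma : m ≠ a) (hmj : m ≠ j) :
    runSize μ T' m = runSize μ T m := by
  refine congrArg card (filter_congr fun c hc => ?_)
  rw [hR.runIdx_eq ha hc]
  by_cases hB : c ∈ belowCells μ T a j
  · have := (mem_filter.1 hB).2.1
    rw [if_pos hB]
    split_ifs <;> omega
  · rw [if_neg hB]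

lemma runSize_left (hR : Redistrib μ T T' a j k)
    (ha : ∀ c ∈ μ.cells, runIdx μ T (T c) = a → c.1 + 1 < j) (haj : a ≠ j)
    (hk : k ≤ #(belowCells μ T a j)) : runSize μ T' a = k := by
  rw [← card_filter_readRank_lt hk, runSize]
  congr 1
  ext c
  simp only [mem_filter]
  constructor
  · rintro ⟨hc, h⟩
    rw [hR.runIdx_eq ha hc] at h
    split_ifs at h with hB hr
    · exact ⟨hB, hr⟩
    · exact absurd h.symm haj
    · exact absurd (mem_filter.2 ⟨hc, Or.inl h, ha c hc h⟩) hB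
  · rintro ⟨hB, hr⟩
    exact ⟨(mem_filter.1 hB).1, by rw [hR.runIdx_eq ha (mem_filter.1 hB).1, if_pos hB, if_pos hr]⟩

lemma runSize_add_runSize (hR : Redistrib μ T T' a j k)
    (ha : ∀ c ∈ μ.cells, runIdx μ T (T c) = a → c.1 + 1 < j) (haj : a ≠ j) :
    runSize μ T' a + runSize μ T' j = runSize μ T a + runSize μ T j := by
  have hsum : ∀ S : ℕ × ℕ → ℕ, runSize μ S a + runSize μ S j =
      #{c ∈ μ.cells | runIdx μ S (S c) = a ∨ runIdx μ S (S c) = j} := fun S => by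
    rw [runSize, runSize, ← card_union_of_disjoint
      (disjoint_filter.2 fun _ _ h h' => haj (h.symm.trans h')), ← filter_or]
  rw [hsum, hsum]
  refine congrArg card (filter_congr fun c hc => ?_)
  rw [hR.runIdx_eq ha hc]
  by_cases hB : c ∈ belowCells μ T a j
  · have := (mem_filter.1 hB).2.1
    rw [if_pos hB]
    split_ifs <;> tauto
  · rw [if_neg hB]

end Redistrib

lemma IsSYT.compSchur_betaList_of_redistrib {n : ℕ} {μ : YoungDiagram} {T T' : ℕ × ℕ → ℕ}
    (hT : IsSYT n μ T) (hT' : IsSYT n μ T') {p : ℕ} (hss : FirstRunsSS n μ T (p + 1))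
    (hv : ∃ v, 1 ≤ v ∧ v ≤ n ∧ runIdx μ T v = p + 2)
    (hR : Redistrib μ T T' (p + 1) (p + 2) (betaRun n μ T (p + 2) - 1)) :
    compSchur (betaList n μ T') = -compSchur (betaList n μ T) := by
  obtain ⟨v, hv1, hvn, hvrun⟩ := hv
  have hn : 1 ≤ n := hv1.trans hvn
  have hjR : p + 2 ≤ runIdx μ T n := hvrun ▸ runIdx_mono hvn
  have ha : ∀ c ∈ μ.cells, runIdx μ T (T c) = p + 1 → c.1 + 1 < p + 2 := fun c hc h => by
    have := hss.fst_eq hT hc h.le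
    omega
  have hpos := hT.runSize_pos hn (m := p + 2) (by omega) hjR
  have hk : betaRun n μ T (p + 2) - 1 ≤ #(belowCells μ T (p + 1) (p + 2)) := by
    have := hT.runSize_le_card_belowCells hss
    rw [hT.betaRun_eq_runSize (by omega)]
    omega
  have hleft := hR.runSize_left ha (by omega) hk
  have hsum := hR.runSize_add_runSize ha (by omega)
  rw [hT.betaRun_eq_runSize (by omega)] at hleft
  have hrun : runIdx μ T' n = runIdx μ T n := by
    refine hT'.runIdx_eq_of_runSize_pos (fun c hc => ?_) ?_
    · rw [hR.runIdx_eq ha hc]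
      have := runIdx_mono (μ := μ) (T := T) (hT.mem_cells_iff.1 hc).2
      split_ifs <;> omega
    · rcases hjR.lt_or_eq with hlt | heq
      · rw [hR.runSize_of_ne ha (by omega) (by omega)]
        exact hT.runSize_pos hn (by omega) le_rfl
      · rw [← heq]
        omega
  rw [hT.betaList_eq, hT'.betaList_eq, hrun]
  exact compSchur_slinky (p := p) (by omega)
    (fun q hq hq' => hR.runSize_of_ne ha (by omega) (by omega))
    (show runSize μ T' (p + 1) + 1 = runSize μ T (p + 2) by omega)
    (show runSize μ T' (p + 2) = runSize μ T (p + 1) + 1 by omega)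

/-- for `T ∈ SYT(λ)` with `T ≠ U_λ`, the composition Schur functions
satisfy `s_{β(slink(T))} = - s_{β(T)}`. -/
theorem compSchur_slink (n : ℕ) (μ : YoungDiagram) (T T' : ℕ × ℕ → ℕ)
    (hT : IsSYT n μ T) (hns : ¬ IsSuperstandard μ T) (h : SlinkRel n T T') :
    compSchur (betaList n μ T') = - compSchur (betaList n μ T) := by
  obtain ⟨μ₀, hT₀, hT', hcase⟩ := h
  obtain rfl := hT₀.shape_eq hT
  rcases hcase with ⟨hss, -⟩ | ⟨-, -, j, ⟨hj, hnot, hprev, -⟩, hR⟩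
  · exact absurd hss hns
  obtain ⟨p, rfl⟩ : ∃ p, j = p + 2 := ⟨j - 2, by
    have : j ≠ 1 := by rintro rfl; exact hnot hT.firstRunsSS_one
    omega⟩
  have hss := hprev (p + 1) (by omega)
  exact hT.compSchur_betaList_of_redistrib hT' hss (hss.exists_runIdx_eq_succ hnot) hR
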